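/- arXiv:1608.03654 — 2 statements merged into one kernel-verified Lean document; each statement's English description precedes it below -/
import Mathlib

section
/- Let k be a field and E ⊇ k a finite Galois extension with Galois group G = Gal(E/k). Then the canonical E-algebra homomorphism E ⊗_k E → ∏_{g ∈ G} E, determined on pure tensors by a ⊗ b ↦ (a · g(b))_{g ∈ G} (where E acts on E ⊗_k E through the left tensor factor), is an isomorphism of E-algebras. Equivalently, the composite of extension of scalars along k ⊆ E with restriction of scalars, applied to E itself, decomposes as a product indexed by G. -/
open scoped TensorProduct

/-!
By Dedekind's lemma the automorphisms `g ∈ G` are `E`-linearly independent as functions `E → E`,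
so the vectors `(g b)_{g ∈ G}`, which are the images of the tensors `1 ⊗ b`, span `∏_{g ∈ G} E`.
Hence the map is surjective, and it is injective because both sides have `E`-dimension
`[E : k] = |G|`.
-/

theorem AlgEquiv.linearIndependent_coeFn (k E : Type*) [CommSemiring k] [Field E]
    [Algebra k E] :
    LinearIndependent E (fun g : E ≃ₐ[k] E => (g : E → E)) :=
  (linearIndependent_monoidHom E E).comp (fun g : E ≃ₐ[k] E => (g : E →* E))
    fun _ _ h => AlgEquiv.ext fun x => DFunLike.congr_fun h x

theorem LinearMap.surjective_of_linearIndependent_apply_mem_range {K M ι α : Type*} [Field K]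
    [AddCommGroup M] [Module K M] [Finite ι] (f : M →ₗ[K] ι → K) {χ : ι → α → K}
    (hχ : LinearIndependent K χ) (hmem : ∀ a, (fun i => χ i a) ∈ LinearMap.range f) :
    Function.Surjective f := by
  rw [← LinearMap.range_eq_top, eq_top_iff, ← span_flip_eq_top_iff_linearIndependent.2 hχ,
    Submodule.span_le]
  rintro _ ⟨a, rfl⟩
  exact hmem a

/-- Let `k` be a field and `E ⊇ k` a finite Galois extension with Galois group
`G = Gal(E/k) = (E ≃ₐ[k] E)`.  The canonical `E`-algebra homomorphism
`E ⊗[k] E → ∏_{g ∈ G} E` determined on pure tensors by `a ⊗ b ↦ (a * g b)_{g ∈ G}`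
(where `E` acts on `E ⊗[k] E` through the left tensor factor) is an isomorphism,
i.e. bijective. -/
theorem galois_tensor_decomposition
    (k E : Type*) [Field k] [Field E] [Algebra k E]
    [FiniteDimensional k E] [IsGalois k E]
    (f : (E ⊗[k] E) →ₐ[E] ((E ≃ₐ[k] E) → E))
    (hf : ∀ a b : E, f (a ⊗ₜ[k] b) = fun g : E ≃ₐ[k] E => a * g b) :
    Function.Bijective f := by
  have hsurj : Function.Surjective f :=
    f.toLinearMap.surjective_of_linearIndependent_apply_mem_range
      (AlgEquiv.linearIndependent_coeFn k E) fun b => ⟨1 ⊗ₜ b, by simp [hf]⟩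
  have hdim : Module.finrank E (E ⊗[k] E) = Module.finrank E ((E ≃ₐ[k] E) → E) := by
    rw [Module.finrank_baseChange, Module.finrank_pi, ← Nat.card_eq_fintype_card,
      IsGalois.card_aut_eq_finrank]
  have hinj : Function.Injective f :=
    (LinearMap.injective_iff_surjective_of_finrank_eq_finrank (f := f.toLinearMap) hdim).2 hsurj
  exact ⟨hinj, hsurj⟩
end

section
/- Let k be a field and E ⊇ k a finite Galois extension with Galois group G = Gal(E/k), and let Y be a finite-dimensional E-vector space. Then the k-linear map Y ⊗_k E → (G → Y) determined on pure tensors by y ⊗ b ↦ (g(b) • y)_{g ∈ G} is a k-linear bijection; moreover it is twisted-semilinear in the sense that for all y ∈ Y, b, c ∈ E and g ∈ G, the image of y ⊗ (b·c) at the coordinate g equals g(c) • (image of y ⊗ b at g). In other words, the composite functor Y ↦ Y ⊗_k E from E-vector spaces to E-vector spaces decomposes as the direct sum ⊕_{g ∈ G} g of the Galois twists of Y. -/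
open scoped TensorProduct

/-!
By Dedekind's independence of characters the automorphisms `g ∈ G` are `E`-linearly independent
functions `E → E`, so the vectors `(g c)_{g ∈ G}`, `c ∈ E`, span `G → E` over `E`. Hence every
`(F g • y)_g` lies in the range of `f`, so `f` is surjective; as both sides have `k`-dimension
`|G| · dim_k Y` (here `|G| = [E : k]` because `E/k` is Galois), `f` is bijective.
-/

theorem Submodule.span_range_eval_eq_top_of_linearIndependent {K ι X : Type*} [Field K]
    [Fintype ι] {v : ι → X → K} (hv : LinearIndependent K v) :
    span K (Set.range fun x i => v i x) = ⊤ := by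
  classical
  rw [← dualAnnihilator_eq_bot_iff, eq_bot_iff]
  intro φ hφ
  rw [mem_dualAnnihilator] at hφ
  have hcoeff : ∀ i, φ (fun j => if i = j then 1 else 0) = 0 := by
    refine Fintype.linearIndependent_iff.mp hv _ (funext fun x => ?_)
    have := hφ _ (subset_span ⟨x, rfl⟩)
    rw [LinearMap.pi_apply_eq_sum_univ] at this
    simpa [mul_comm] using this
  exact LinearMap.ext fun F => by simp [φ.pi_apply_eq_sum_univ F, hcoeff]

theorem linearIndependent_algEquiv_coeFn (K L : Type*) [CommSemiring K] [CommRing L] [IsDomain L]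
    [Algebra K L] : LinearIndependent L (fun g : L ≃ₐ[K] L => (g : L → L)) :=
  (linearIndependent_monoidHom L L).comp (fun g : L ≃ₐ[K] L => (g : L →* L))
    fun _ _ h => AlgEquiv.ext (DFunLike.congr_fun h :)

section

variable {k E : Type*} [Field k] [Field E] [Algebra k E] [FiniteDimensional k E]

theorem finrank_tensorProduct_eq_finrank_pi_algEquiv [IsGalois k E] (V : Type*) [AddCommGroup V]
    [Module k V] [FiniteDimensional k V] :
    Module.finrank k (V ⊗[k] E) = Module.finrank k ((E ≃ₐ[k] E) → V) := by
  rw [Module.finrank_tensorProduct, Module.finrank_pi_fintype, Finset.sum_const, Finset.card_univ,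
    ← Nat.card_eq_fintype_card, IsGalois.card_aut_eq_finrank, smul_eq_mul, mul_comm]

variable {Y : Type*} [AddCommGroup Y] [Module E Y] [Module k Y]
  {f : Y ⊗[k] E →ₗ[k] ((E ≃ₐ[k] E) → Y)}

theorem surjective_of_tmul_eq_galois_smul
    (hf : ∀ (y : Y) (b : E), f (y ⊗ₜ[k] b) = fun g => g b • y) : Function.Surjective f := by
  classical
  -- Quantifying over `y` lets the span induction absorb an `E`-scalar into `y`.
  have hsmul : ∀ (F : (E ≃ₐ[k] E) → E) (y : Y), (fun g => F g • y) ∈ LinearMap.range f := by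
    intro F
    have hF : F ∈ Submodule.span E (Set.range fun c (g : E ≃ₐ[k] E) => g c) := by
      rw [Submodule.span_range_eval_eq_top_of_linearIndependent
        (linearIndependent_algEquiv_coeFn k E)]
      trivial
    induction hF using Submodule.span_induction with
    | mem F hF =>
      obtain ⟨c, rfl⟩ := hF
      exact fun y => ⟨y ⊗ₜ c, hf y c⟩
    | zero => exact fun _ => ⟨0, by ext; simp⟩
    | add F F' _ _ hF hF' =>
      intro y
      convert add_mem (hF y) (hF' y) using 1
      ext; simp [add_smul]
    | smul a F _ hF =>
      intro y
      simpa only [Pi.smul_apply, smul_eq_mul, mul_comm a, mul_smul] using hF (a • y)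
  intro H
  rw [← Finset.univ_sum_single H]
  refine (Submodule.sum_mem _ fun g₀ _ => ?_ : _ ∈ LinearMap.range f)
  simpa only [Pi.single_apply_smul] using hsmul (Pi.single g₀ 1) (H g₀)

theorem bijective_of_tmul_eq_galois_smul [IsGalois k E] [IsScalarTower k E Y]
    [FiniteDimensional E Y] (hf : ∀ (y : Y) (b : E), f (y ⊗ₜ[k] b) = fun g => g b • y) :
    Function.Bijective f := by
  have : FiniteDimensional k Y := .trans k E Y
  have hsurj := surjective_of_tmul_eq_galois_smul hf
  exact ⟨(LinearMap.injective_iff_surjective_of_finrank_eq_finrank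
    (finrank_tensorProduct_eq_finrank_pi_algEquiv Y)).mpr hsurj, hsurj⟩

end

/-- Let `k` be a field, `E ⊇ k` a finite Galois extension with Galois group
`G = Gal(E/k) = (E ≃ₐ[k] E)`, and `Y` a finite-dimensional `E`-vector space.
The `k`-linear map `Y ⊗[k] E → (G → Y)` determined on pure tensors by
`y ⊗ b ↦ (g b • y)_{g ∈ G}` is a `k`-linear bijection, and it is
twisted-semilinear: the image of `y ⊗ (b * c)` at the coordinate `g` equals
`g c • (image of y ⊗ b at g)`.  In other words, base change to `E` of an
`E`-vector space decomposes as the direct sum of its Galois twists. -/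
theorem base_change_decomposes_into_galois_twists
    (k E : Type*) [Field k] [Field E] [Algebra k E]
    [FiniteDimensional k E] [IsGalois k E]
    (Y : Type*) [AddCommGroup Y] [Module E Y] [Module k Y]
    [IsScalarTower k E Y] [FiniteDimensional E Y]
    (f : (Y ⊗[k] E) →ₗ[k] ((E ≃ₐ[k] E) → Y))
    (hf : ∀ (y : Y) (b : E), f (y ⊗ₜ[k] b) = fun g : E ≃ₐ[k] E => g b • y) :
    Function.Bijective f ∧
      ∀ (y : Y) (b c : E) (g : E ≃ₐ[k] E),
        f (y ⊗ₜ[k] (b * c)) g = g c • f (y ⊗ₜ[k] b) g := by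
  refine ⟨bijective_of_tmul_eq_galois_smul hf, fun y b c g => ?_⟩
  simp only [hf, map_mul, mul_smul, smul_comm (g b)]
end
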